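/- Let A be an n×n row-stochastic matrix and X ∈ ℚ^{C(n,2)} nonnegative. If X·A^{∨2} = X, then X̂ = AᵀX̂A. -/

import Mathlib

open Matrix BigOperators Filter

/-- Index set of pairs `(i,j)` with `i < j`. -/
abbrev Pairs (n : ℕ) := {p : Fin n × Fin n // p.1 < p.2}

/-- Zeon second power: matrix of 2×2 permanents. -/
def zeonSq {n : ℕ} {R : Type*} [CommRing R] (A : Matrix (Fin n) (Fin n) R) :
    Matrix (Pairs n) (Pairs n) R :=
  Matrix.of fun I J =>
    A I.1.1 J.1.1 * A I.1.2 J.1.2 + A I.1.1 J.1.2 * A I.1.2 J.1.1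

/-- `Mat(X)`: symmetric matrix with zero diagonal built from a vector indexed by pairs. -/
def matOf {n : ℕ} {R : Type*} [CommRing R] (X : Pairs n → R) :
    Matrix (Fin n) (Fin n) R :=
  Matrix.of fun i j =>
    if h : i < j then X ⟨(i, j), h⟩ else if h' : j < i then X ⟨(j, i), h'⟩ else 0

/-! Off the diagonal, `Aᵀ X̂ A` agrees with `Mat(X A^{∨2}) = X̂`. Since `A u = u`, the matrices
`Aᵀ X̂ A` and `X̂` have the same sum of entries, so the diagonal of `Aᵀ X̂ A` sums to zero. That
diagonal is nonnegative because `A` and `X` are, hence it vanishes. -/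

namespace Matrix

variable {ι R : Type*} [Fintype ι]

theorem one_dotProduct_transpose_mul_mul_mulVec_one [CommSemiring R]
    {A : Matrix ι ι R} (M : Matrix ι ι R) (hA : A *ᵥ 1 = 1) :
    1 ⬝ᵥ (Aᵀ * M * A) *ᵥ 1 = 1 ⬝ᵥ M *ᵥ 1 := by
  rw [← mulVec_mulVec, hA, ← mulVec_mulVec, dotProduct_mulVec, vecMul_transpose, hA]

theorem eq_of_offDiag_eq_of_diag_nonneg [DecidableEq ι] [CommRing R] [PartialOrder R]
    [IsOrderedRing R] {B M : Matrix ι ι R} (hoff : ∀ i j, i ≠ j → B i j = M i j)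
    (hM : ∀ i, M i i = 0) (hB : ∀ i, 0 ≤ B i i) (hsum : 1 ⬝ᵥ B *ᵥ 1 = 1 ⬝ᵥ M *ᵥ 1) :
    B = M := by
  have hdiag : B - M = diagonal fun i => B i i := by
    ext i j
    obtain rfl | hij := eq_or_ne i j
    · simp [hM]
    · simp [hoff i j hij, hij]
  have htrace : ∑ i, B i i = 0 := by
    calc ∑ i, B i i = 1 ⬝ᵥ (diagonal fun i => B i i) *ᵥ 1 := by simp [dotProduct, mulVec_diagonal]
      _ = 1 ⬝ᵥ (B - M) *ᵥ 1 := by rw [hdiag]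
      _ = 0 := by rw [sub_mulVec, dotProduct_sub, hsum, sub_self]
  have hB0 : ∀ i, B i i = 0 := fun i =>
    (Finset.sum_eq_zero_iff_of_nonneg fun i _ => hB i).mp htrace i (Finset.mem_univ i)
  rw [← sub_eq_zero, hdiag]
  simp [hB0]

end Matrix

section Pairs

variable {n : ℕ}

theorem sum_pairs_eq_sum_sum_ite {M : Type*} [AddCommMonoid M] (f : Fin n → Fin n → M) :
    ∑ I : Pairs n, f I.1.1 I.1.2 = ∑ i, ∑ j, if i < j then f i j else 0 := by
  rw [← Fintype.sum_prod_type (fun p => if p.1 < p.2 then f p.1 p.2 else 0), ← Finset.sum_filter,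
    ← Finset.sum_subtype_eq_sum_filter, Finset.subtype_univ]

theorem sum_sum_eq_sum_pairs {M : Type*} [AddCommMonoid M] (g : Fin n → Fin n → M)
    (hg : ∀ i, g i i = 0) :
    ∑ i, ∑ j, g i j = ∑ I : Pairs n, (g I.1.1 I.1.2 + g I.1.2 I.1.1) := by
  have hsplit : ∀ i j, g i j = (if i < j then g i j else 0) + if j < i then g i j else 0 := by
    intro i j
    rcases lt_trichotomy i j with h | rfl | h
    · simp [h, h.not_gt]
    · simp [hg]
    · simp [h, h.not_gt]
  calc ∑ i, ∑ j, g i j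
      = ∑ i, ∑ j, ((if i < j then g i j else 0) + if j < i then g i j else 0) := by
        simp_rw [← hsplit]
    _ = (∑ i, ∑ j, if i < j then g i j else 0) + ∑ i, ∑ j, if i < j then g j i else 0 := by
        rw [Finset.sum_comm (f := fun i j => if i < j then g j i else 0)]
        simp_rw [Finset.sum_add_distrib]
    _ = ∑ I : Pairs n, (g I.1.1 I.1.2 + g I.1.2 I.1.1) := by
        rw [sum_pairs_eq_sum_sum_ite fun i j => g i j + g j i]
        simp_rw [ite_add_zero, Finset.sum_add_distrib]

variable {R : Type*} [CommRing R]

@[simp]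
theorem matOf_apply_self (X : Pairs n → R) (i : Fin n) : matOf X i i = 0 := by
  simp [matOf]

theorem matOf_apply_of_lt (X : Pairs n → R) {i j : Fin n} (h : i < j) :
    matOf X i j = X ⟨(i, j), h⟩ := by
  simp [matOf, h]

theorem matOf_apply_of_gt (X : Pairs n → R) {i j : Fin n} (h : i < j) :
    matOf X j i = X ⟨(i, j), h⟩ := by
  simp [matOf, h, h.not_gt]

theorem transpose_mul_matOf_mul_apply (A : Matrix (Fin n) (Fin n) R) (X : Pairs n → R)
    (k l : Fin n) :
    (Aᵀ * matOf X * A) k l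
      = ∑ I : Pairs n, X I * (A I.1.1 k * A I.1.2 l + A I.1.1 l * A I.1.2 k) := by
  have hexpand : (Aᵀ * matOf X * A) k l = ∑ i, ∑ j, A i k * matOf X i j * A j l := by
    simp only [mul_apply, transpose_apply, Finset.sum_mul]
    exact Finset.sum_comm
  rw [hexpand, sum_sum_eq_sum_pairs _ fun i => by simp]
  refine Finset.sum_congr rfl fun I _ => ?_
  rw [matOf_apply_of_lt X I.2, matOf_apply_of_gt X I.2]
  ring

theorem transpose_mul_matOf_mul_apply_of_ne (A : Matrix (Fin n) (Fin n) R) (X : Pairs n → R)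
    {k l : Fin n} (hkl : k ≠ l) :
    (Aᵀ * matOf X * A) k l = matOf (X ᵥ* zeonSq A) k l := by
  rw [transpose_mul_matOf_mul_apply]
  rcases hkl.lt_or_gt with h | h
  · rw [matOf_apply_of_lt _ h]
    rfl
  · rw [matOf_apply_of_gt _ h]
    refine Finset.sum_congr rfl fun I _ => ?_
    simp only [zeonSq, of_apply]
    ring

theorem transpose_mul_matOf_mul_apply_self_nonneg [PartialOrder R] [IsOrderedRing R]
    {A : Matrix (Fin n) (Fin n) R} (hA : ∀ i j, 0 ≤ A i j) {X : Pairs n → R} (hX : ∀ I, 0 ≤ X I)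
    (k : Fin n) : 0 ≤ (Aᵀ * matOf X * A) k k := by
  rw [transpose_mul_matOf_mul_apply]
  exact Finset.sum_nonneg fun I _ => mul_nonneg (hX I) <|
    add_nonneg (mul_nonneg (hA _ _) (hA _ _)) (mul_nonneg (hA _ _) (hA _ _))

end Pairs

theorem stmt10 {n : ℕ} (A : Matrix (Fin n) (Fin n) ℚ)
    (hA0 : ∀ i j, 0 ≤ A i j) (hA1 : ∀ i, ∑ j, A i j = 1)
    (X : Pairs n → ℚ) (hX : ∀ I, 0 ≤ X I)
    (h : X ᵥ* zeonSq A = X) :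
    matOf X = Aᵀ * matOf X * A := by
  have hA : A *ᵥ 1 = 1 := by
    ext i
    simp [mulVec, dotProduct, hA1]
  refine (eq_of_offDiag_eq_of_diag_nonneg (fun k l hkl => ?_) (matOf_apply_self X)
    (transpose_mul_matOf_mul_apply_self_nonneg hA0 hX)
    (one_dotProduct_transpose_mul_mul_mulVec_one _ hA)).symm
  rw [transpose_mul_matOf_mul_apply_of_ne A X hkl, h]
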